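/- Let c_min, c_max with 0 < c_min ≤ c_max, let U, β, α' be real numbers with α' > 0, and define φ̂(w) = U − β + (U/α' − U + 2β)·exp(w/(c_min·α')) for w ∈ [0, c_min]. Then for any w ∈ [0, c_min], the exact identity holds: ∫₀^w φ̂(u) du + β·w + (c_max − w)·U = α'·c_min·(φ̂(w) − β) + U·(c_max − c_min). -/

import Mathlib

open Real

theorem integral_add_mul_exp_div (a b : ℝ) {c : ℝ} (hc : c ≠ 0) (w : ℝ) :
    ∫ u in (0 : ℝ)..w, (a + b * exp (u / c)) = a * w + b * (c * (exp (w / c) - 1)) := by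
  rw [intervalIntegral.integral_add intervalIntegrable_const
      (by apply Continuous.intervalIntegrable; fun_prop),
    intervalIntegral.integral_const_mul, intervalIntegral.integral_comp_div exp hc, integral_exp]
  simp only [zero_div, exp_zero, intervalIntegral.integral_const, sub_zero, smul_eq_mul]
  ring

theorem stmt_2_general (cmin cmax U β α' : ℝ)
    (hcmin : 0 < cmin) (hα' : 0 < α')
    (φhat : ℝ → ℝ)
    (hφ : ∀ w, φhat w = U - β + (U / α' - U + 2 * β) * Real.exp (w / (cmin * α')))
    (w : ℝ) :
    (∫ u in (0:ℝ)..w, φhat u) + β * w + (cmax - w) * U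
      = α' * cmin * (φhat w - β) + U * (cmax - cmin) := by
  rw [funext hφ, integral_add_mul_exp_div _ _ (by positivity)]
  field_simp
  ring

theorem stmt_2 (cmin cmax U β α' : ℝ)
    (hcmin : 0 < cmin) (hcc : cmin ≤ cmax) (hα' : 0 < α')
    (φhat : ℝ → ℝ)
    (hφ : ∀ w, φhat w = U - β + (U / α' - U + 2 * β) * Real.exp (w / (cmin * α')))
    (w : ℝ) (hw : w ∈ Set.Icc (0 : ℝ) cmin) :
    (∫ u in (0:ℝ)..w, φhat u) + β * w + (cmax - w) * U
      = α' * cmin * (φhat w - β) + U * (cmax - cmin) :=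
  stmt_2_general cmin cmax U β α' hcmin hα' φhat hφ w
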